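/- Let 1 ≤ q < p < ∞ and let μ, ν be Borel measures on ℝⁿ. Suppose there exists a constant A such that for every nonnegative Lipschitz function g : ℝⁿ → ℝ one has the weak type estimate sup_{t>0} t · μ({x ∈ ℝⁿ : g(x) > t})^{1/p} ≤ A ( ∫_{ℝⁿ} |∇g|^q dν )^{1/q}. Then there exists a constant C, depending only on p and q, such that for every nonnegative Lipschitz function g : ℝⁿ → ℝ the strong estimate holds: ( ∫_{ℝⁿ} g^p dμ )^{1/p} ≤ C · A · ( ∫_{ℝⁿ} |∇g|^q dν )^{1/q}. -/

import Mathlib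

open MeasureTheory Set
open scoped ENNReal NNReal

noncomputable section

/-- `n`-dimensional Euclidean space. -/
abbrev ES (n : ℕ) := EuclideanSpace ℝ (Fin n)

/-- The extended-nonnegative-real absolute value of a real number. -/
def en (r : ℝ) : ℝ≥0∞ := (‖r‖₊ : ℝ≥0∞)

/-- A rectangle in `ℝⁿ` with sides parallel to the coordinate axes, given by its
(nondegenerate, bounded) interval endpoints. -/
structure Rect (n : ℕ) where
  lo : Fin n → ℝ
  hi : Fin n → ℝ
  lt : ∀ i, lo i < hi i

/-- The underlying set of a rectangle (half-open, so that dyadic pieces are disjoint). -/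
def Rect.set {n : ℕ} (R : Rect n) : Set (ES n) :=
  {x | ∀ i, x i ∈ Set.Ico (R.lo i) (R.hi i)}

/-- The (Euclidean) diameter of a rectangle. -/
def Rect.diam {n : ℕ} (R : Rect n) : ℝ :=
  Real.sqrt (∑ i, (R.hi i - R.lo i) ^ 2)

/-- `R.DyadicSub S` : `S` is a dyadic subrectangle of `R`, i.e. is obtained from `R`
by finitely many iterated passages to dyadic children (bisection of every side);
at generation `j` each side of `R` is split into `2^j` equal parts. -/
def Rect.DyadicSub {n : ℕ} (R S : Rect n) : Prop :=
  ∃ (j : ℕ) (k : Fin n → ℕ), (∀ i, k i < 2 ^ j) ∧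
    (∀ i, S.lo i = R.lo i + (k i : ℝ) * (R.hi i - R.lo i) / 2 ^ j) ∧
    (∀ i, S.hi i = R.lo i + ((k i : ℝ) + 1) * (R.hi i - R.lo i) / 2 ^ j)

/-- The eccentricity `e(R) = |R|^{1/n} / d(R)` of a rectangle. -/
def eccen {n : ℕ} (R : Rect n) : ℝ :=
  (volume R.set).toReal ^ ((1 : ℝ) / n) / R.diam

/-- An axis-parallel (half-open) cube with corner `a` and sidelength `ℓ`. -/
def cubeSet {n : ℕ} (a : Fin n → ℝ) (ℓ : ℝ) : Set (ES n) :=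
  {x | ∀ i, x i ∈ Set.Ico (a i) (a i + ℓ)}

section Weights

variable {X : Type} [MeasureSpace X]

/-- A weight, seen as an `ℝ≥0∞`-valued density. -/
def wE (w : X → ℝ) (x : X) : ℝ≥0∞ := ENNReal.ofReal (w x)

/-- `w(E) = ∫_E w dx`. -/
def wMeas (w : X → ℝ) (E : Set X) : ℝ≥0∞ := ∫⁻ x in E, wE w x

/-- The average `(1/|E|) ∫_E g` (with values in `ℝ≥0∞`). -/
def lavg (g : X → ℝ≥0∞) (E : Set X) : ℝ≥0∞ := (∫⁻ x in E, g x) / volume E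

/-- The Muckenhoupt `A_q` constant of the weight `w` relative to the family `F` of sets:
for `q = 1` it is the least `c` with `⨍_E w ≤ c · essinf_E w` for all `E ∈ F`, and for
`q ≠ 1` it is `sup_{E ∈ F} (⨍_E w)(⨍_E w^{-1/(q-1)})^{q-1}`. -/
def aqConstOn (F : Set (Set X)) (q : ℝ) (w : X → ℝ) : ℝ≥0∞ :=
  if q = 1 then
    sInf {c : ℝ≥0∞ | ∀ E ∈ F, lavg (wE w) E ≤ c * essInf (wE w) (volume.restrict E)}
  else
    ⨆ E ∈ F, lavg (wE w) E * (lavg (fun x => wE w x ^ (-1 / (q - 1))) E) ^ (q - 1)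

/-- The maximal operator associated to the family `F`. -/
def famMaxOn (F : Set (Set X)) (g : X → ℝ≥0∞) (x : X) : ℝ≥0∞ :=
  ⨆ E ∈ F, ⨆ _ : x ∈ E, lavg g E

/-- The Fujii–Wilson `A_∞` constant of `w` relative to the family `F`:
`sup_{E∈F} (1/w(E)) ∫_E M_F(w χ_E)`. -/
def fwOn (F : Set (Set X)) (w : X → ℝ) : ℝ≥0∞ :=
  ⨆ E ∈ F, (∫⁻ x in E, famMaxOn F (E.indicator (wE w)) x) / wMeas w E

end Weights

/-- The family `𝓡` of axis-parallel rectangles of `ℝⁿ` (as sets). -/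
def rectFamily (n : ℕ) : Set (Set (ES n)) := Set.range (Rect.set (n := n))

/-- The family of axis-parallel cubes of `ℝⁿ` (as sets). -/
def cubeFamily (n : ℕ) : Set (Set (ES n)) :=
  {E | ∃ (a : Fin n → ℝ) (ℓ : ℝ), 0 < ℓ ∧ E = cubeSet a ℓ}

/-- `[w]_{A_{q,𝓡}}`. -/
def aqR (n : ℕ) (q : ℝ) (w : ES n → ℝ) : ℝ≥0∞ := aqConstOn (rectFamily n) q w

/-- `[w]_{A_q}` over cubes. -/
def aqCube (n : ℕ) (q : ℝ) (w : ES n → ℝ) : ℝ≥0∞ := aqConstOn (cubeFamily n) q w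

/-- The Fujii–Wilson constant `[w]_{A_{∞,𝓡}}`. -/
def fwR (n : ℕ) (w : ES n → ℝ) : ℝ≥0∞ := fwOn (rectFamily n) w

/-- The `SD^s_{p,𝓡}(w)` (smallness-preserving) condition with constant `c` for a functional
`a` on rectangles: for every rectangle `R` and every countable pairwise disjoint family of
dyadic subrectangles of `R`,
`(Σ_i a(R_i)^p w(R_i)/w(R))^{1/p} ≤ c (|⋃ R_i|/|R|)^{1/s} a(R)`. -/
def SDCond (n : ℕ) (p s c : ℝ) (w : ES n → ℝ) (a : Rect n → ℝ) : Prop :=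
  ∀ (R : Rect n) (S : Set ℕ) (T : ℕ → Rect n),
    (∀ i ∈ S, R.DyadicSub (T i)) →
    (S.PairwiseDisjoint fun i => (T i).set) →
    (∑' i : S, ENNReal.ofReal (a (T ↑i)) ^ p * wMeas w (T ↑i).set / wMeas w R.set) ^ (1 / p)
      ≤ ENNReal.ofReal c * (volume (⋃ i ∈ S, (T i).set) / volume R.set) ^ (1 / s) *
          ENNReal.ofReal (a R)

/-- The `D_{p,𝓡}(w)` condition with constant `c` for a functional `a` on rectangles. -/
def DCond (n : ℕ) (p c : ℝ) (w : ES n → ℝ) (a : Rect n → ℝ) : Prop :=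
  ∀ (R : Rect n) (S : Set ℕ) (T : ℕ → Rect n),
    (∀ i ∈ S, R.DyadicSub (T i)) →
    (S.PairwiseDisjoint fun i => (T i).set) →
    (∑' i : S, ENNReal.ofReal (a (T ↑i)) ^ p * wMeas w (T ↑i).set / wMeas w R.set) ^ (1 / p)
      ≤ ENNReal.ofReal (c * a R)

/-- `g` is (everywhere equal to) a polynomial of total degree at most `k` in the `n`
coordinates. -/
def IsPolyDeg (n k : ℕ) (g : ES n → ℝ) : Prop :=
  ∃ p : MvPolynomial (Fin n) ℝ, p.totalDegree ≤ k ∧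
    ∀ x : ES n, g x = MvPolynomial.eval (fun i => x i) p

/-- `g = P_E f`, the orthogonal projection of `f` onto polynomials of degree at most `k`
with respect to the inner product `⟨u,v⟩_E = (1/|E|)∫_E u v`. -/
def IsProjOn (n k : ℕ) (E : Set (ES n)) (f g : ES n → ℝ) : Prop :=
  IsPolyDeg n k g ∧ ∀ φ : ES n → ℝ, IsPolyDeg n k φ → ∫ x in E, (f x - g x) * φ x = 0

/-- `|∇^m f|(x)`: Euclidean norm of the collection of all `m`-th order partial
derivatives of `f` at `x`. -/
def gradmNorm (n m : ℕ) (f : ES n → ℝ) (x : ES n) : ℝ :=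
  Real.sqrt (∑ idx : Fin m → Fin n,
    (iteratedFDeriv ℝ m f x (fun j => EuclideanSpace.single (idx j) (1 : ℝ))) ^ 2)

/-- The dyadic maximal function relative to the rectangle `R`. -/
def dyadMax {n : ℕ} (R : Rect n) (g : ES n → ℝ≥0∞) (x : ES n) : ℝ≥0∞ :=
  ⨆ J : Rect n, ⨆ _ : R.DyadicSub J, ⨆ _ : x ∈ J.set, lavg g J.set

/-- The sharp maximal function `M_k^♯ f(x) = sup_{R ∋ x} ⨍_R |f − P_R f|`, where `P R`
is (assumed to be) the degree-`k` polynomial projection of `f` on `R`. -/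
def sharpMax (n : ℕ) (f : ES n → ℝ) (P : Rect n → ES n → ℝ) (x : ES n) : ℝ≥0∞ :=
  ⨆ R : Rect n, ⨆ _ : x ∈ R.set, lavg (fun y => en (f y - P R y)) R.set

/-- A rectangle of the biparameter family `𝓡_c`: a product of two axis-parallel cubes
`I₁ ⊂ ℝ^{n₁}`, `I₂ ⊂ ℝ^{n₂}`. -/
structure CRect (n₁ n₂ : ℕ) where
  c₁ : Fin n₁ → ℝ
  c₂ : Fin n₂ → ℝ
  l₁ : ℝ
  l₂ : ℝ
  hl₁ : 0 < l₁
  hl₂ : 0 < l₂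

/-- The underlying set `I₁ × I₂` of a biparameter rectangle. -/
def CRect.set {n₁ n₂ : ℕ} (R : CRect n₁ n₂) : Set (ES n₁ × ES n₂) :=
  (cubeSet R.c₁ R.l₁) ×ˢ (cubeSet R.c₂ R.l₂)

/-- The family `𝓡_c` (as sets). -/
def cRectFamily (n₁ n₂ : ℕ) : Set (Set (ES n₁ × ES n₂)) :=
  Set.range (CRect.set (n₁ := n₁) (n₂ := n₂))

/-- `[w]_{A_{q,𝓡_c}}`. -/
def aqC (n₁ n₂ : ℕ) (q : ℝ) (w : ES n₁ × ES n₂ → ℝ) : ℝ≥0∞ :=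
  aqConstOn (cRectFamily n₁ n₂) q w

/-- `|∇₁ f|(z)`: Euclidean norm of the partial gradient of `f` in the first `n₁`
variables (via the a.e.-defined Fréchet derivative). -/
def grad1Norm (n₁ n₂ : ℕ) (f : ES n₁ × ES n₂ → ℝ) (z : ES n₁ × ES n₂) : ℝ :=
  Real.sqrt (∑ i : Fin n₁, (fderiv ℝ f z (EuclideanSpace.single i (1 : ℝ), 0)) ^ 2)

/-- `|∇₂ f|(z)`: Euclidean norm of the partial gradient of `f` in the last `n₂`
variables. -/
def grad2Norm (n₁ n₂ : ℕ) (f : ES n₁ × ES n₂ → ℝ) (z : ES n₁ × ES n₂) : ℝ :=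
  Real.sqrt (∑ i : Fin n₂, (fderiv ℝ f z (0, EuclideanSpace.single i (1 : ℝ))) ^ 2)

/-! Maz'ya's truncation argument. Cut `g` into the dyadic bands `(2^(k-1), 2^k)`: the truncation
`G_k` of `g` to the `k`-th band is Lipschitz, nonnegative, and its derivative is that of `g` on
the band and zero elsewhere, so the energies `a_k = ∫ |∇G_k|^q dν` add up to at most
`∫ |∇g|^q dν`. Since `G_k ≥ 2^(k-1)` wherever `g ≥ 2^k`, the weak estimate for `G_k` bounds
`2^k μ{g > 2^k}^(1/p)` by `4 A a_k^(1/q)`. A dyadic layer-cake bound for `∫ g^p dμ` and the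
inclusion `ℓ¹ ⊆ ℓ^(p/q)` (as `q ≤ p`) then give the strong estimate with `C = 8`. -/

open scoped Function Topology

namespace ENNReal

theorem tsum_indicator_apply_le {ι α : Type*} {s : ι → Set α} (hs : Pairwise (Disjoint on s))
    (f : α → ℝ≥0∞) (x : α) : ∑' i, (s i).indicator f x ≤ f x := by
  by_cases hx : ∃ i, x ∈ s i
  · obtain ⟨i, hi⟩ := hx
    rw [tsum_eq_single i fun j hj =>
      indicator_of_notMem (fun hj' => (hs hj).ne_of_mem hj' hi rfl) f]
    exact indicator_le_self _ _ x
  · push Not at hx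
    simp [indicator_of_notMem (hx _)]

theorem tsum_rpow_le_rpow_tsum {ι : Type*} (f : ι → ℝ≥0∞) {r : ℝ} (hr : 1 ≤ r) :
    ∑' i, f i ^ r ≤ (∑' i, f i) ^ r := by
  have hsplit : ∀ x : ℝ≥0∞, x ^ r = x ^ (r - 1) * x := fun x => by
    simpa using rpow_add_of_nonneg (x := x) (r - 1) 1 (by linarith) zero_le_one
  calc ∑' i, f i ^ r = ∑' i, f i ^ (r - 1) * f i := by simp_rw [← hsplit]
    _ ≤ ∑' i, (∑' j, f j) ^ (r - 1) * f i := by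
        gcongr with i
        exact ENNReal.le_tsum i
    _ = (∑' i, f i) ^ r := by rw [ENNReal.tsum_mul_left, ← hsplit]

theorem rpow_tsum_le_of_rpow_le {ι : Type*} {u a : ι → ℝ≥0∞} {p q : ℝ} {B : ℝ≥0∞}
    (hq : 0 < q) (hqp : q ≤ p) (h : ∀ i, u i ^ (1 / p) ≤ B * a i ^ (1 / q)) :
    (∑' i, u i) ^ (1 / p) ≤ B * (∑' i, a i) ^ (1 / q) := by
  have hp : 0 < p := hq.trans_le hqp
  have hu : ∀ i, u i ≤ B ^ p * a i ^ (p / q) := fun i => by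
    calc u i = (u i ^ (1 / p)) ^ p := by rw [← rpow_mul, one_div_mul_cancel hp.ne', rpow_one]
      _ ≤ (B * a i ^ (1 / q)) ^ p := by gcongr; exact h i
      _ = B ^ p * a i ^ (p / q) := by
          rw [mul_rpow_of_nonneg _ _ hp.le, ← rpow_mul, one_div_mul_eq_div]
  calc (∑' i, u i) ^ (1 / p) ≤ (B ^ p * (∑' i, a i) ^ (p / q)) ^ (1 / p) := by
        gcongr
        calc ∑' i, u i ≤ ∑' i, B ^ p * a i ^ (p / q) := ENNReal.tsum_le_tsum hu
          _ = B ^ p * ∑' i, a i ^ (p / q) := ENNReal.tsum_mul_left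
          _ ≤ B ^ p * (∑' i, a i) ^ (p / q) := by
              gcongr
              exact tsum_rpow_le_rpow_tsum a ((one_le_div hq).2 hqp)
    _ = B * (∑' i, a i) ^ (1 / q) := by
        rw [mul_rpow_of_nonneg _ _ (by positivity), ← rpow_mul, ← rpow_mul,
          mul_one_div_cancel hp.ne', rpow_one]
        congr 2
        field_simp

end ENNReal

theorem MeasureTheory.lintegral_ofReal_rpow_le_tsum_zpow {X : Type*} [MeasurableSpace X]
    (μ : Measure X) {f : X → ℝ} (hf : Measurable f) {b p : ℝ} (hb : 1 < b) (hp : 0 < p) :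
    ∫⁻ x, ENNReal.ofReal (f x) ^ p ∂μ
      ≤ ∑' k : ℤ, ENNReal.ofReal (b ^ (k + 1)) ^ p * μ {x | b ^ k < f x} := by
  set s : ℤ → Set X := fun k => f ⁻¹' Ioc (b ^ k) (b ^ (k + 1))
  have hs : ∀ k, MeasurableSet (s k) := fun k => hf measurableSet_Ioc
  calc ∫⁻ x, ENNReal.ofReal (f x) ^ p ∂μ
      ≤ ∫⁻ x, ∑' k : ℤ, (s k).indicator (fun _ => ENNReal.ofReal (b ^ (k + 1)) ^ p) x ∂μ := by
        refine lintegral_mono fun x => ?_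
        rcases le_or_gt (f x) 0 with hx | hx
        · simp [ENNReal.ofReal_eq_zero.2 hx, ENNReal.zero_rpow_of_pos hp]
        obtain ⟨k, hk⟩ := exists_mem_Ioc_zpow hx hb
        refine le_trans ?_ (ENNReal.le_tsum k)
        rw [indicator_of_mem (show x ∈ s k from hk)]
        gcongr
        exact hk.2
    _ = ∑' k : ℤ, ENNReal.ofReal (b ^ (k + 1)) ^ p * μ (s k) := by
        rw [lintegral_tsum fun k => (measurable_const.indicator (hs k)).aemeasurable]
        simp_rw [lintegral_indicator_const (hs _)]
    _ ≤ ∑' k : ℤ, ENNReal.ofReal (b ^ (k + 1)) ^ p * μ {x | b ^ k < f x} := by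
        gcongr with k
        exact fun x hx => hx.1

section BandTruncation

variable {X : Type*} {g : X → ℝ} {a b : ℝ}

def bandTrunc (g : X → ℝ) (a b : ℝ) (x : X) : ℝ := min (max (g x) a) b - a

theorem bandTrunc_nonneg (hab : a ≤ b) (x : X) : 0 ≤ bandTrunc g a b x :=
  sub_nonneg.2 (le_min (le_max_right _ _) hab)

theorem bandTrunc_le (x : X) : bandTrunc g a b x ≤ b - a := by
  unfold bandTrunc
  linarith [min_le_right (max (g x) a) b]

theorem bandTrunc_of_le_left (hab : a ≤ b) {x : X} (hx : g x ≤ a) : bandTrunc g a b x = 0 := by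
  simp [bandTrunc, max_eq_right hx, min_eq_left hab]

theorem bandTrunc_of_le_right {x : X} (hx : b ≤ g x) : bandTrunc g a b x = b - a := by
  simp [bandTrunc, min_eq_right (hx.trans (le_max_left _ _))]

theorem LipschitzWith.bandTrunc [PseudoEMetricSpace X] {K : ℝ≥0} (hg : LipschitzWith K g) :
    LipschitzWith K (_root_.bandTrunc g a b) :=
  (((hg.max_const a).min_const b).sub (LipschitzWith.const a)).weaken (by simp)

variable {E : Type*} [NormedAddCommGroup E] [NormedSpace ℝ E] {g : E → ℝ}

theorem fderiv_bandTrunc (hg : Continuous g) (hab : a ≤ b) :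
    fderiv ℝ (bandTrunc g a b) = (g ⁻¹' Ioo a b).indicator (fderiv ℝ g) := by
  ext1 x
  by_cases hx : x ∈ g ⁻¹' Ioo a b
  · have heq : bandTrunc g a b =ᶠ[𝓝 x] fun y => g y - a :=
      Filter.eventually_of_mem (hg.isOpen_preimage _ isOpen_Ioo |>.mem_nhds hx) fun y hy => by
        simp [bandTrunc, max_eq_left hy.1.le, min_eq_left hy.2.le]
    rw [indicator_of_mem hx, heq.fderiv_eq, fderiv_sub_const]
  rw [indicator_of_notMem hx]
  -- Off the open band, `x` is a global extremum of the truncation, whether or not `g` is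
  -- differentiable there.
  rcases le_or_gt (g x) a with hxa | hxa
  · refine IsLocalMin.fderiv_eq_zero (Filter.Eventually.of_forall fun y => ?_)
    rw [bandTrunc_of_le_left hab hxa]
    exact bandTrunc_nonneg hab y
  · refine IsLocalMax.fderiv_eq_zero (Filter.Eventually.of_forall fun y => ?_)
    rw [bandTrunc_of_le_right (not_lt.1 fun h => hx ⟨hxa, h⟩)]
    exact bandTrunc_le y

theorem tsum_lintegral_fderiv_bandTrunc_le [MeasurableSpace E] [OpensMeasurableSpace E]
    {ι : Type*} [Countable ι] {a b : ι → ℝ} (hab : ∀ i, a i ≤ b i)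
    (hd : Pairwise (Disjoint on fun i => Ioo (a i) (b i))) (hg : Continuous g) {q : ℝ}
    (hq : 0 < q) (ν : Measure E) :
    ∑' i, ∫⁻ x, (‖fderiv ℝ (bandTrunc g (a i) (b i)) x‖₊ : ℝ≥0∞) ^ q ∂ν
      ≤ ∫⁻ x, (‖fderiv ℝ g x‖₊ : ℝ≥0∞) ^ q ∂ν := by
  rw [← lintegral_tsum fun i => by fun_prop]
  refine lintegral_mono fun x => ?_
  have hband : ∀ i, (‖fderiv ℝ (bandTrunc g (a i) (b i)) x‖₊ : ℝ≥0∞) ^ q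
      = (g ⁻¹' Ioo (a i) (b i)).indicator (fun y => (‖fderiv ℝ g y‖₊ : ℝ≥0∞) ^ q) x := by
    intro i
    rw [fderiv_bandTrunc hg (hab i)]
    by_cases hx : x ∈ g ⁻¹' Ioo (a i) (b i) <;> simp [hx, hq]
  simp_rw [hband]
  exact ENNReal.tsum_indicator_apply_le (fun i j hij => (hd hij).preimage g) _ x

end BandTruncation

theorem rpow_mul_measure_lt_le_bandTrunc {X : Type*} [MeasurableSpace X] (μ : Measure X)
    (g : X → ℝ) {p : ℝ} (hp : 0 < p) (k : ℤ) :
    (ENNReal.ofReal (2 ^ (k + 1)) ^ p * μ {x | 2 ^ k < g x}) ^ (1 / p)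
      ≤ ENNReal.ofReal 8 * (ENNReal.ofReal (2 ^ (k - 2))
          * μ {x | 2 ^ (k - 2) < bandTrunc g (2 ^ (k - 1)) (2 ^ k) x} ^ (1 / p)) := by
  have h8 : (2 : ℝ) ^ (k + 1) = 8 * 2 ^ (k - 2) := by
    rw [zpow_add₀ two_ne_zero, zpow_sub₀ two_ne_zero]
    norm_num
    ring
  have hsub : {x | (2 : ℝ) ^ k < g x}
      ⊆ {x | 2 ^ (k - 2) < bandTrunc g (2 ^ (k - 1)) (2 ^ k) x} := fun x hx => by
    change 2 ^ (k - 2) < bandTrunc g _ _ x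
    rw [bandTrunc_of_le_right (le_of_lt hx)]
    have := zpow_pos (two_pos : (0 : ℝ) < 2) k
    simp only [zpow_sub₀ (two_ne_zero' ℝ)]
    norm_num
    linarith
  rw [ENNReal.mul_rpow_of_nonneg _ _ (by positivity), ← ENNReal.rpow_mul,
    mul_one_div_cancel hp.ne', ENNReal.rpow_one, ← mul_assoc, ← ENNReal.ofReal_mul (by norm_num),
    h8]
  gcongr

theorem lintegral_rpow_le_of_weakType {E : Type*} [NormedAddCommGroup E] [NormedSpace ℝ E]
    [MeasurableSpace E] [OpensMeasurableSpace E] {μ ν : Measure E} {p q A : ℝ} (hq : 0 < q)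
    (hqp : q ≤ p)
    (hweak : ∀ f : E → ℝ, (∃ K, LipschitzWith K f) → (∀ x, 0 ≤ f x) → ∀ t : ℝ, 0 < t →
      ENNReal.ofReal t * μ {x | t < f x} ^ (1 / p)
        ≤ ENNReal.ofReal A * (∫⁻ x, (‖fderiv ℝ f x‖₊ : ℝ≥0∞) ^ q ∂ν) ^ (1 / q))
    {g : E → ℝ} {K : ℝ≥0} (hg : LipschitzWith K g) :
    (∫⁻ x, ENNReal.ofReal (g x) ^ p ∂μ) ^ (1 / p)
      ≤ ENNReal.ofReal (8 * A) * (∫⁻ x, (‖fderiv ℝ g x‖₊ : ℝ≥0∞) ^ q ∂ν) ^ (1 / q) := by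
  have hp : 0 < p := hq.trans_le hqp
  have hmono : Monotone fun k : ℤ => (2 : ℝ) ^ (k - 1) :=
    fun j k hjk => zpow_le_zpow_right₀ one_le_two (by omega)
  have hband : ∀ k : ℤ, (2 : ℝ) ^ (k - 1) ≤ 2 ^ k :=
    fun k => zpow_le_zpow_right₀ one_le_two (by omega)
  have hdisj : Pairwise (Disjoint on fun k : ℤ => Ioo ((2 : ℝ) ^ (k - 1)) (2 ^ k)) := by
    simpa [Order.succ_eq_add_one] using hmono.pairwise_disjoint_on_Ioo_succ
  set G : ℤ → E → ℝ := fun k => bandTrunc g (2 ^ (k - 1)) (2 ^ k)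
  have hlevel : ∀ k : ℤ, (ENNReal.ofReal (2 ^ (k + 1)) ^ p * μ {x | 2 ^ k < g x}) ^ (1 / p)
      ≤ ENNReal.ofReal 8 * ENNReal.ofReal A
        * (∫⁻ x, (‖fderiv ℝ (G k) x‖₊ : ℝ≥0∞) ^ q ∂ν) ^ (1 / q) := fun k =>
    calc _ ≤ _ := rpow_mul_measure_lt_le_bandTrunc μ g hp k
      _ ≤ _ := mul_le_mul_right
          (hweak _ ⟨K, hg.bandTrunc⟩ (bandTrunc_nonneg (hband k)) _ (zpow_pos two_pos _)) _
      _ = _ := (mul_assoc _ _ _).symm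
  calc (∫⁻ x, ENNReal.ofReal (g x) ^ p ∂μ) ^ (1 / p)
      ≤ (∑' k : ℤ, ENNReal.ofReal (2 ^ (k + 1)) ^ p * μ {x | 2 ^ k < g x}) ^ (1 / p) := by
        gcongr
        exact lintegral_ofReal_rpow_le_tsum_zpow μ hg.continuous.measurable one_lt_two hp
    _ ≤ ENNReal.ofReal 8 * ENNReal.ofReal A
          * (∑' k, ∫⁻ x, (‖fderiv ℝ (G k) x‖₊ : ℝ≥0∞) ^ q ∂ν) ^ (1 / q) :=
        ENNReal.rpow_tsum_le_of_rpow_le hq hqp hlevel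
    _ ≤ ENNReal.ofReal 8 * ENNReal.ofReal A
          * (∫⁻ x, (‖fderiv ℝ g x‖₊ : ℝ≥0∞) ^ q ∂ν) ^ (1 / q) := by
        gcongr
        exact tsum_lintegral_fderiv_bandTrunc_le hband hdisj hg.continuous hq ν
    _ = _ := by rw [ENNReal.ofReal_mul (by norm_num)]

theorem stmt19_general (n : ℕ) (p q : ℝ) (hq : 1 ≤ q) (hqp : q < p) :
    ∃ C : ℝ, 0 < C ∧
      ∀ (μ ν : Measure (ES n)) (A : ℝ),
        (∀ g : ES n → ℝ, (∃ K, LipschitzWith K g) → (∀ x, 0 ≤ g x) →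
          ∀ t : ℝ, 0 < t →
            ENNReal.ofReal t * μ {x | t < g x} ^ (1 / p)
              ≤ ENNReal.ofReal A * (∫⁻ x, (‖fderiv ℝ g x‖₊ : ℝ≥0∞) ^ q ∂ν) ^ (1 / q)) →
        ∀ g : ES n → ℝ, (∃ K, LipschitzWith K g) → (∀ x, 0 ≤ g x) →
          (∫⁻ x, ENNReal.ofReal (g x) ^ p ∂μ) ^ (1 / p)
            ≤ ENNReal.ofReal (C * A) * (∫⁻ x, (‖fderiv ℝ g x‖₊ : ℝ≥0∞) ^ q ∂ν) ^ (1 / q) :=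
  ⟨8, by norm_num, fun _ _ _ hweak _ ⟨_, hg⟩ _ =>
    lintegral_rpow_le_of_weakType (by linarith) hqp.le hweak hg⟩

/-- truncation method: the weak `(q,p)` Sobolev-type estimate for all
nonnegative Lipschitz functions implies the strong one. -/
theorem stmt19 (n : ℕ) (hn : 1 ≤ n) (p q : ℝ) (hq : 1 ≤ q) (hqp : q < p) :
    ∃ C : ℝ, 0 < C ∧
      ∀ (μ ν : Measure (ES n)) (A : ℝ),
        (∀ g : ES n → ℝ, (∃ K, LipschitzWith K g) → (∀ x, 0 ≤ g x) →
          ∀ t : ℝ, 0 < t →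
            ENNReal.ofReal t * μ {x | t < g x} ^ (1 / p)
              ≤ ENNReal.ofReal A * (∫⁻ x, (‖fderiv ℝ g x‖₊ : ℝ≥0∞) ^ q ∂ν) ^ (1 / q)) →
        ∀ g : ES n → ℝ, (∃ K, LipschitzWith K g) → (∀ x, 0 ≤ g x) →
          (∫⁻ x, ENNReal.ofReal (g x) ^ p ∂μ) ^ (1 / p)
            ≤ ENNReal.ofReal (C * A) * (∫⁻ x, (‖fderiv ℝ g x‖₊ : ℝ≥0∞) ^ q ∂ν) ^ (1 / q) :=
  stmt19_general n p q hq hqp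

end
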